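/- Let f be C¹ with L_f-Lipschitz gradient and g M-weakly convex, with γ ∈ (0, 1/L_f] ∩ (0, 1/M]. Then inf φ = inf φ_γ, and every minimizer of φ is a minimizer of φ_γ. If additionally γ < 1/L_f, then argmin φ = argmin φ_γ. -/

import Mathlib

open scoped RealInnerProductSpace

/-- The forward-backward envelope, written in closed form via a prox-selection `T`. -/
noncomputable def fbEnv7 {n : ℕ} (f g : EuclideanSpace ℝ (Fin n) → ℝ)
    (f' T : EuclideanSpace ℝ (Fin n) → EuclideanSpace ℝ (Fin n)) (γ : ℝ)
    (x : EuclideanSpace ℝ (Fin n)) : ℝ :=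
  f x + g (T x) - γ * ⟪f' x, γ⁻¹ • (x - T x)⟫ + (γ / 2) * ‖γ⁻¹ • (x - T x)‖ ^ 2

/-- Descent lemma: a function with `Lf`-Lipschitz gradient satisfies the quadratic
upper bound. -/
lemma descent7 {n : ℕ} (f : EuclideanSpace ℝ (Fin n) → ℝ)
    (f' : EuclideanSpace ℝ (Fin n) → EuclideanSpace ℝ (Fin n)) (Lf : ℝ)
    (hf : ∀ x, HasGradientAt f (f' x) x)
    (hLf : ∀ x y, ‖f' x - f' y‖ ≤ Lf * ‖x - y‖) (x y : EuclideanSpace ℝ (Fin n)) :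
    f y ≤ f x + ⟪f' x, y - x⟫ + Lf / 2 * ‖y - x‖ ^ 2 := by
  set v := y - x with hv
  set q : ℝ → ℝ := fun t => f (x + t • v) - t * ⟪f' x, v⟫ - t ^ 2 * (Lf / 2 * ‖v‖ ^ 2) with hq
  have hderiv : ∀ t : ℝ, HasDerivAt q
      (⟪f' (x + t • v), v⟫ - ⟪f' x, v⟫ - 2 * t * (Lf / 2 * ‖v‖ ^ 2)) t := by
    intro t
    have hline : HasDerivAt (fun t : ℝ => x + t • v) v t := by
      simpa using ((hasDerivAt_id t).smul_const v).const_add x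
    have h1 : HasDerivAt (fun t : ℝ => f (x + t • v)) ⟪f' (x + t • v), v⟫ t := by
      have := (hf (x + t • v)).hasFDerivAt.comp_hasDerivAt t hline
      exact this
    have h2 : HasDerivAt (fun t : ℝ => t * ⟪f' x, v⟫) ⟪f' x, v⟫ t := by
      simpa using (hasDerivAt_id t).mul_const (⟪f' x, v⟫ : ℝ)
    have h3 : HasDerivAt (fun t : ℝ => t ^ 2 * (Lf / 2 * ‖v‖ ^ 2))
        (2 * t * (Lf / 2 * ‖v‖ ^ 2)) t := by
      simpa using (hasDerivAt_pow 2 t).mul_const (Lf / 2 * ‖v‖ ^ 2)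
    exact (h1.sub h2).sub h3
  have hanti : AntitoneOn q (Set.Icc (0:ℝ) 1) := by
    refine antitoneOn_of_hasDerivWithinAt_nonpos (convex_Icc 0 1)
      (fun t _ => (hderiv t).continuousAt.continuousWithinAt)
      (fun t _ => (hderiv t).hasDerivWithinAt) ?_
    intro t ht
    rw [interior_Icc] at ht
    have ht0 : (0:ℝ) ≤ t := le_of_lt ht.1
    have h1 : ⟪f' (x + t • v), v⟫ - ⟪f' x, v⟫ ≤ Lf * t * ‖v‖ ^ 2 := by
      have := real_inner_le_norm (f' (x + t • v) - f' x) v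
      rw [inner_sub_left] at this
      have h2 : ‖f' (x + t • v) - f' x‖ ≤ Lf * (t * ‖v‖) := by
        have := hLf (x + t • v) x
        simpa [norm_smul, abs_of_nonneg ht0] using this
      calc ⟪f' (x + t • v), v⟫ - ⟪f' x, v⟫ ≤ ‖f' (x + t • v) - f' x‖ * ‖v‖ := this
        _ ≤ (Lf * (t * ‖v‖)) * ‖v‖ := mul_le_mul_of_nonneg_right h2 (norm_nonneg _)
        _ = Lf * t * ‖v‖ ^ 2 := by ring
    nlinarith [h1]
  have := hanti (Set.left_mem_Icc.2 one_pos.le) (Set.right_mem_Icc.2 one_pos.le) one_pos.le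
  simp only [hq, one_smul, one_pow, one_mul, zero_smul, add_zero, zero_mul, zero_pow,
    sub_zero] at this
  have hxy : x + v = y := by rw [hv]; abel
  rw [hxy] at this
  nlinarith [this]

/-- Closed-form simplification of the envelope. -/
lemma env_eq7 {n : ℕ} (f g : EuclideanSpace ℝ (Fin n) → ℝ)
    (f' T : EuclideanSpace ℝ (Fin n) → EuclideanSpace ℝ (Fin n)) {γ : ℝ} (hγ0 : 0 < γ)
    (x : EuclideanSpace ℝ (Fin n)) :
    fbEnv7 f g f' T γ x
      = f x + g (T x) - ⟪f' x, x - T x⟫ + (1 / (2 * γ)) * ‖x - T x‖ ^ 2 := by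
  have hγ : γ ≠ 0 := ne_of_gt hγ0
  rw [fbEnv7, real_inner_smul_right, norm_smul]
  rw [Real.norm_eq_abs, abs_inv, abs_of_pos hγ0]
  field_simp

/-- For `γ ∈ (0, 1/L_f] ∩ (0, 1/M]`, `inf φ = inf φ_γ` and every minimizer of
`φ` minimizes `φ_γ`; if moreover `γ < 1/L_f`, then `argmin φ = argmin φ_γ`. -/
theorem stmt_7 {n : ℕ} (f g : EuclideanSpace ℝ (Fin n) → ℝ)
    (f' : EuclideanSpace ℝ (Fin n) → EuclideanSpace ℝ (Fin n))
    (Lf M γ : ℝ) (hM : 0 < M)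
    (hf : ∀ x, HasGradientAt f (f' x) x)
    (hLf : ∀ x y, ‖f' x - f' y‖ ≤ Lf * ‖x - y‖)
    (hlsc : LowerSemicontinuous g)
    (hwc : ConvexOn ℝ Set.univ (fun x => g x + (M / 2) * ‖x‖ ^ 2))
    (hγ0 : 0 < γ) (hγM : γ ≤ 1 / M) (hγL : γ * Lf ≤ 1)
    (T : EuclideanSpace ℝ (Fin n) → EuclideanSpace ℝ (Fin n))
    (hT : ∀ x v, g (T x) + (1 / (2 * γ)) * ‖T x - (x - γ • f' x)‖ ^ 2 ≤
      g v + (1 / (2 * γ)) * ‖v - (x - γ • f' x)‖ ^ 2) :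
    ((⨅ x, ((f x + g x : ℝ) : EReal)) = ⨅ x, ((fbEnv7 f g f' T γ x : ℝ) : EReal)) ∧
      (∀ x, IsMinOn (fun y => f y + g y) Set.univ x →
        IsMinOn (fbEnv7 f g f' T γ) Set.univ x) ∧
      (γ * Lf < 1 →
        {x | IsMinOn (fun y => f y + g y) Set.univ x} =
          {x | IsMinOn (fbEnv7 f g f' T γ) Set.univ x}) := by
  have hγ : γ ≠ 0 := ne_of_gt hγ0
  -- upper sandwich: fbEnv7 x ≤ f x + g x
  have hub : ∀ x, fbEnv7 f g f' T γ x ≤ f x + g x := by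
    intro x
    have h := hT x x
    have e1 : T x - (x - γ • f' x) = γ • f' x - (x - T x) := by abel
    have e2 : x - (x - γ • f' x) = γ • f' x := by abel
    rw [e1, e2, norm_sub_sq_real, real_inner_smul_left] at h
    rw [env_eq7 f g f' T hγ0]
    have hinner : ⟪f' x, x - T x⟫ = ⟪x - T x, f' x⟫ := real_inner_comm _ _
    have hγpos : (0:ℝ) < 2 * γ := by linarith
    rw [hinner]
    have hkey : g (T x) - ⟪x - T x, f' x⟫ + 1 / (2 * γ) * ‖x - T x‖ ^ 2 ≤ g x := by
      have expand : (1 / (2 * γ)) * (‖γ • f' x‖ ^ 2 - 2 * (γ * ⟪f' x, x - T x⟫)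
          + ‖x - T x‖ ^ 2)
          = (1 / (2 * γ)) * ‖γ • f' x‖ ^ 2 - ⟪f' x, x - T x⟫
            + (1 / (2 * γ)) * ‖x - T x‖ ^ 2 := by
        field_simp
      rw [expand] at h
      rw [real_inner_comm]
      linarith
    linarith
  -- lower sandwich with gap
  have hlb : ∀ x, f (T x) + g (T x) + (1 / (2 * γ) - Lf / 2) * ‖x - T x‖ ^ 2
      ≤ fbEnv7 f g f' T γ x := by
    intro x
    have hd := descent7 f f' Lf hf hLf x (T x)
    rw [env_eq7 f g f' T hγ0]
    have e : T x - x = -(x - T x) := by abel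
    rw [e, inner_neg_right, norm_neg] at hd
    linarith
  have hLfγ : Lf / 2 ≤ 1 / (2 * γ) := by
    rw [div_le_div_iff₀ two_pos (by linarith : (0:ℝ) < 2 * γ)]
    nlinarith
  have hlb' : ∀ x, f (T x) + g (T x) ≤ fbEnv7 f g f' T γ x := by
    intro x
    have := hlb x
    nlinarith [sq_nonneg ‖x - T x‖]
  refine ⟨?_, ?_, ?_⟩
  · -- infima agree
    apply le_antisymm
    · refine le_iInf fun x => ?_
      refine iInf_le_of_le (T x) ?_
      exact_mod_cast hlb' x
    · refine le_iInf fun x => ?_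
      refine iInf_le_of_le x ?_
      exact_mod_cast hub x
  · -- minimizers of φ minimize the envelope
    intro x hx
    intro y _
    have h1 : fbEnv7 f g f' T γ x ≤ f x + g x := hub x
    have h2 : f x + g x ≤ f (T y) + g (T y) := hx (Set.mem_univ (T y))
    have h3 : f (T y) + g (T y) ≤ fbEnv7 f g f' T γ y := hlb' y
    simp only [Set.mem_setOf_eq]
    linarith
  · -- argmin sets agree when γ Lf < 1
    intro hstrict
    ext x
    simp only [Set.mem_setOf_eq]
    constructor
    · intro hx y _
      have h1 : fbEnv7 f g f' T γ x ≤ f x + g x := hub x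
      have h2 : f x + g x ≤ f (T y) + g (T y) := hx (Set.mem_univ (T y))
      have h3 : f (T y) + g (T y) ≤ fbEnv7 f g f' T γ y := hlb' y
      simp only [Set.mem_setOf_eq]
      linarith
    · intro hx
      have hgap : (0:ℝ) < 1 / (2 * γ) - Lf / 2 := by
        rw [sub_pos, div_lt_div_iff₀ two_pos (by linarith : (0:ℝ) < 2 * γ)]
        nlinarith
      -- the chain φ(Tx) + gap ≤ env(x) ≤ env(Tx) ≤ φ(Tx) forces x = T x
      have c1 := hlb x
      have c2 : fbEnv7 f g f' T γ x ≤ fbEnv7 f g f' T γ (T x) := hx (Set.mem_univ (T x))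
      have c3 := hub (T x)
      have hr : ‖x - T x‖ ^ 2 ≤ 0 := by nlinarith
      have hr0 : x - T x = 0 := by
        have := sq_nonneg ‖x - T x‖
        have : ‖x - T x‖ ^ 2 = 0 := le_antisymm hr this
        have : ‖x - T x‖ = 0 := by nlinarith [norm_nonneg (x - T x)]
        exact norm_eq_zero.mp this
      have hTx : T x = x := by
        have := sub_eq_zero.mp hr0; exact this.symm
      intro y _
      have h1 : f x + g x ≤ fbEnv7 f g f' T γ x := by
        have := hlb' x; rw [hTx] at this; exact this
      have h2 : fbEnv7 f g f' T γ x ≤ fbEnv7 f g f' T γ y := hx (Set.mem_univ y)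
      have h3 : fbEnv7 f g f' T γ y ≤ f y + g y := hub y
      simp only [Set.mem_setOf_eq]
      linarith
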